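/- arXiv:1012.0350 — 2 statements merged into one kernel-verified Lean document; each statement's English description precedes it below -/
import Mathlib

section
/- For a nonzero p-adic integer q, the subgroup Γ_q generated by γ_n = a_n/p^n is dense in ℚ (equivalently, dense in ℝ). -/
/-- for a nonzero p-adic integer `q` with canonical sequence `a`,
the additive subgroup `Γ_q` of `ℚ` generated by `γ_n = a_n / p^n` is dense in `ℝ`
(for the archimedean topology). -/
theorem gamma_subgroup_dense (p : ℕ) [Fact p.Prime] (q : ℤ_[p]) (hq : q ≠ 0)
    (a : ℕ → ℤ)
    (hbound : ∀ n, 1 ≤ n → 0 ≤ a n ∧ a n ≤ (p : ℤ) ^ n - 1)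
    (happrox : ∀ n, 1 ≤ n → ‖q - (a n : ℤ_[p])‖ ≤ (p : ℝ) ^ (-(n : ℤ))) :
    Dense ((fun x : ℚ => (x : ℝ)) ''
      (AddSubgroup.closure {x : ℚ | ∃ n, 1 ≤ n ∧ x = (a n : ℚ) / (p : ℚ) ^ n} : Set ℚ)) := by
  have hp : p.Prime := Fact.out
  have hp1 : (1 : ℝ) < (p : ℝ) := by exact_mod_cast hp.one_lt
  have hp0 : (0 : ℝ) < (p : ℝ) := by positivity
  set S : Set ℚ := {x : ℚ | ∃ n, 1 ≤ n ∧ x = (a n : ℚ) / (p : ℚ) ^ n} with hS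
  set G : AddSubgroup ℚ := AddSubgroup.closure S with hG
  set Gr : AddSubgroup ℝ := AddSubgroup.map (Rat.castHom ℝ).toAddMonoidHom G with hGr
  have hmap : ((fun x : ℚ => (x : ℝ)) '' (G : Set ℚ)) = (Gr : Set ℝ) := by
    rw [hGr, AddSubgroup.coe_map]; rfl
  rw [hmap]
  rcases AddSubgroup.dense_or_cyclic Gr with h | ⟨α, hα⟩
  · exact h
  exfalso
  -- basic facts
  have hqn : 0 < ‖q‖ := norm_pos_iff.mpr hq
  -- norm of a n equals norm of q for n large
  have key : ∀ n : ℕ, 1 ≤ n → (p : ℝ) ^ (-(n : ℤ)) < ‖q‖ → ‖((a n : ℤ_[p]))‖ = ‖q‖ := by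
    intro n hn hlt
    have h1 : ‖q - (a n : ℤ_[p])‖ < ‖q‖ := lt_of_le_of_lt (happrox n hn) hlt
    have heq : (a n : ℤ_[p]) = q + -(q - (a n : ℤ_[p])) := by ring
    apply le_antisymm
    · calc ‖(a n : ℤ_[p])‖ = ‖q + -(q - (a n : ℤ_[p]))‖ := by rw [← heq]
        _ ≤ max ‖q‖ ‖-(q - (a n : ℤ_[p]))‖ := PadicInt.nonarchimedean _ _
        _ ≤ ‖q‖ := max_le le_rfl (by rw [norm_neg]; exact h1.le)
    · by_contra hc
      push_neg at hc
      have h2 : ‖q‖ ≤ max ‖(a n : ℤ_[p])‖ ‖q - (a n : ℤ_[p])‖ := by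
        calc ‖q‖ = ‖(a n : ℤ_[p]) + (q - (a n : ℤ_[p]))‖ := by ring_nf
          _ ≤ _ := PadicInt.nonarchimedean _ _
      exact absurd h2 (not_le.mpr (max_lt hc h1))
  -- choose N with p^(-N) < ‖q‖ and N ≥ 1
  obtain ⟨n0, hn0⟩ : ∃ n0 : ℕ, ((p : ℝ)⁻¹) ^ n0 < ‖q‖ :=
    exists_pow_lt_of_lt_one hqn (inv_lt_one_of_one_lt₀ hp1)
  have hsmall : ∀ n : ℕ, n0 ≤ n → (p : ℝ) ^ (-(n : ℤ)) < ‖q‖ := by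
    intro n hn
    have : ((p : ℝ)⁻¹) ^ n ≤ ((p : ℝ)⁻¹) ^ n0 :=
      pow_le_pow_of_le_one (by positivity) (by
        rw [inv_le_one_iff₀]; right; exact hp1.le) hn
    calc (p : ℝ) ^ (-(n : ℤ)) = ((p : ℝ)⁻¹) ^ n := by
          rw [zpow_neg, zpow_natCast, inv_pow]
      _ ≤ _ := this
      _ < ‖q‖ := hn0
  set N : ℕ := max 1 n0 with hN
  have hN1 : 1 ≤ N := le_max_left _ _
  -- membership of γ n in G
  have hmem : ∀ n : ℕ, 1 ≤ n → ((a n : ℚ) / (p : ℚ) ^ n) ∈ G :=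
    fun n hn => AddSubgroup.subset_closure ⟨n, hn, rfl⟩
  -- each γ n is an integer multiple of α in ℝ
  have hmul : ∀ n : ℕ, 1 ≤ n → ∃ m : ℤ, m • α = (((a n : ℚ) / (p : ℚ) ^ n : ℚ) : ℝ) := by
    intro n hn
    have : (((a n : ℚ) / (p : ℚ) ^ n : ℚ) : ℝ) ∈ Gr := ⟨_, hmem n hn, rfl⟩
    rw [hα, AddSubgroup.mem_closure_singleton] at this
    exact this
  -- a N ≠ 0
  have hnormN : ‖((a N : ℤ_[p]))‖ = ‖q‖ := key N hN1 (hsmall N (le_max_right _ _))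
  have haN : a N ≠ 0 := by
    intro h
    rw [h] at hnormN
    simp at hnormN
    exact hqn.ne' hnormN.symm
  have hγN : ((a N : ℚ) / (p : ℚ) ^ N : ℚ) ≠ 0 := by
    apply div_ne_zero
    · exact_mod_cast haN
    · exact pow_ne_zero _ (Nat.cast_ne_zero.mpr hp.pos.ne')
  obtain ⟨m0, hm0⟩ := hmul N hN1
  have hm0ne : m0 ≠ 0 := by
    rintro rfl
    rw [zero_zsmul] at hm0
    exact hγN (by exact_mod_cast hm0.symm)
  -- α is rational
  set β : ℚ := ((a N : ℚ) / (p : ℚ) ^ N) / (m0 : ℚ) with hβ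
  have hαβ : α = (β : ℝ) := by
    have hm0' : (m0 : ℝ) ≠ 0 := Int.cast_ne_zero.mpr hm0ne
    rw [hβ]
    push_cast
    rw [eq_div_iff hm0']
    rw [zsmul_eq_mul, mul_comm] at hm0
    exact_mod_cast hm0
  -- for each good n, γ n = m • β in ℚ
  have hrat : ∀ n : ℕ, 1 ≤ n → ∃ m : ℤ, ((a n : ℚ) / (p : ℚ) ^ n) = m * β := by
    intro n hn
    obtain ⟨m, hm⟩ := hmul n hn
    refine ⟨m, ?_⟩
    apply Rat.cast_injective (α := ℝ)
    rw [← hm, hαβ, zsmul_eq_mul]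
    push_cast
    ring
  -- norm computation in ℚ_[p]
  set C : ℝ := ‖((β : ℚ) : ℚ_[p])‖ with hC
  have hub : ∀ n : ℕ, N ≤ n → ‖q‖ * (p : ℝ) ^ n ≤ C := by
    intro n hn
    have hn1 : 1 ≤ n := le_trans hN1 hn
    have hnorm : ‖((a n : ℤ_[p]))‖ = ‖q‖ :=
      key n hn1 (hsmall n (le_trans (le_max_right _ _) hn))
    obtain ⟨m, hm⟩ := hrat n hn1
    have hcast : (((a n : ℚ) / (p : ℚ) ^ n : ℚ) : ℚ_[p]) = (m : ℚ_[p]) * ((β : ℚ) : ℚ_[p]) := by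
      rw [hm]; push_cast; ring
    have hlhs : ‖(((a n : ℚ) / (p : ℚ) ^ n : ℚ) : ℚ_[p])‖ = ‖q‖ * (p : ℝ) ^ n := by
      have : (((a n : ℚ) / (p : ℚ) ^ n : ℚ) : ℚ_[p]) = ((a n : ℤ_[p]) : ℚ_[p]) / (p : ℚ_[p]) ^ n := by
        push_cast; ring
      rw [this, norm_div, norm_pow, Padic.norm_p,
        PadicInt.padic_norm_e_of_padicInt, hnorm]
      rw [inv_pow, div_eq_mul_inv, inv_inv]
    calc ‖q‖ * (p : ℝ) ^ n = ‖(((a n : ℚ) / (p : ℚ) ^ n : ℚ) : ℚ_[p])‖ := hlhs.symm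
      _ = ‖(m : ℚ_[p])‖ * C := by rw [hcast, norm_mul]
      _ ≤ 1 * C := by
          apply mul_le_mul_of_nonneg_right (Padic.norm_int_le_one m) (norm_nonneg _)
      _ = C := one_mul C
  -- contradiction: p^n unbounded
  obtain ⟨n, hn⟩ := pow_unbounded_of_one_lt (C / ‖q‖) hp1
  set n' : ℕ := max N n with hn'
  have h1 : ‖q‖ * (p : ℝ) ^ n' ≤ C := hub n' (le_max_left _ _)
  have h2 : C / ‖q‖ < (p : ℝ) ^ n' :=
    lt_of_lt_of_le hn (pow_le_pow_right₀ hp1.le (le_max_right _ _))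
  rw [div_lt_iff₀ hqn] at h2
  rw [mul_comm] at h1
  linarith
end

section
/- For a p-adic integer q with |q|_p < 1 and infinitely many nonzero digits, the quotient group Γ_q/ℤ is isomorphic to the Prüfer p-group ℤ(p^∞). -/
/-!
Each generator `a n / p ^ n` is killed by `p ^ n` in `ℚ/ℤ`, so the image of `Γ_q` lies in the
Prüfer group. Conversely, write `v` for the valuation of `q ≠ 0`. For `n > v` the approximation
`‖q - a n‖ ≤ p ^ (-n) < ‖q‖` forces `a n = p ^ v * b` with `p ∤ b` (all triangles are isosceles),
so `a n / p ^ n = b / p ^ (n - v)` generates the same cyclic subgroup as `1 / p ^ (n - v)`;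
as `n` grows these subgroups exhaust `ℤ(p^∞)`.
-/

open AddSubgroup

theorem mem_zmultiples_zsmul_of_isCoprime {G : Type*} [AddGroup G] {y : G} {N b : ℤ}
    (hy : N • y = 0) (h : IsCoprime N b) : y ∈ zmultiples (b • y) := by
  obtain ⟨s, t, hst⟩ := h
  refine ⟨t, ?_⟩
  calc t • b • y = (s * N + t * b) • y := by
        rw [add_zsmul, mul_zsmul, mul_zsmul, hy, zsmul_zero, zero_add]
    _ = y := by rw [hst, one_zsmul]

namespace AddCircle

variable {𝕜 : Type*} [Field 𝕜] [LinearOrder 𝕜] [IsStrictOrderedRing 𝕜] {T : 𝕜} [Fact (0 < T)]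

theorem nsmul_coe_intCast_div_mul_eq_zero (c : ℤ) {n : ℕ} (hn : 0 < n) :
    n • ((c / n * T : 𝕜) : AddCircle T) = 0 := by
  have h := addOrderOf_nsmul_eq_zero ((T / n : 𝕜) : AddCircle T)
  rw [addOrderOf_period_div hn] at h
  rw [intCast_div_mul_eq_zsmul, smul_comm, h, zsmul_zero]

theorem mem_zmultiples_coe_period_div_of_nsmul_eq_zero {n : ℕ} (hn : 0 < n) {u : AddCircle T}
    (hu : n • u = 0) : u ∈ zmultiples ((T / n : 𝕜) : AddCircle T) := by
  obtain ⟨m, -, rfl⟩ := (AddCircle.nsmul_eq_zero_iff hn).mp hu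
  rw [natCast_div_mul_eq_nsmul]
  exact nsmul_mem (mem_zmultiples _) m

end AddCircle

section Padic

variable {p : ℕ} [hp : Fact p.Prime]

theorem PadicInt.exists_eq_pow_valuation_mul_of_norm_sub_lt {q : ℤ_[p]} {a : ℤ}
    (h : ‖q - a‖ < ‖q‖) : ∃ b : ℤ, a = p ^ q.valuation * b ∧ IsCoprime (p : ℤ) b := by
  have hq : q ≠ 0 := norm_pos_iff.mp ((norm_nonneg _).trans_lt h)
  have h' : ‖(a : ℤ_[p]) - q‖ < ‖q‖ := by rwa [norm_sub_rev]
  have hnorm : ‖(a : ℤ_[p])‖ = p ^ (-(q.valuation : ℤ)) := by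
    rw [← norm_eq_zpow_neg_valuation hq, ← add_sub_cancel q (a : ℤ_[p]),
      IsUltrametricDist.norm_add_eq_max_of_norm_ne_norm h'.ne', max_eq_left h'.le]
  obtain ⟨b, rfl⟩ : (p : ℤ) ^ q.valuation ∣ a := norm_int_le_pow_iff_dvd.mp hnorm.le
  refine ⟨b, rfl, IsCoprime.symm (norm_intCast_eq_one_iff.mp ?_)⟩
  rw [Int.cast_mul, norm_mul, Int.cast_pow, Int.cast_natCast, norm_p_pow] at hnorm
  have hpos : (0 : ℝ) < p ^ (-(q.valuation : ℤ)) := zpow_pos (mod_cast hp.out.pos) _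
  exact (mul_eq_left₀ hpos.ne').mp hnorm

theorem coe_one_div_pow_mem_zmultiples_of_norm_sub_le {q : ℤ_[p]} (hq : q ≠ 0) {a : ℤ} {k : ℕ}
    (hk : 0 < k) (ha : ‖q - a‖ ≤ (p : ℝ) ^ (-((k + q.valuation : ℕ) : ℤ))) :
    ((1 / p ^ k : ℚ) : AddCircle (1 : ℚ)) ∈
      zmultiples ((a / p ^ (k + q.valuation) : ℚ) : AddCircle (1 : ℚ)) := by
  have hlt : ‖q - a‖ < ‖q‖ := by
    rw [PadicInt.norm_eq_zpow_neg_valuation hq]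
    exact ha.trans_lt (zpow_lt_zpow_right₀ (mod_cast hp.out.one_lt) (by omega))
  obtain ⟨b, rfl, hb⟩ := PadicInt.exists_eq_pow_valuation_mul_of_norm_sub_lt hlt
  have hgen : ((p ^ q.valuation * b : ℤ) / p ^ (k + q.valuation) : ℚ) = b • (1 / p ^ k : ℚ) := by
    have : (p : ℚ) ≠ 0 := mod_cast hp.out.ne_zero
    rw [zsmul_eq_mul, pow_add]
    push_cast
    field_simp
  rw [hgen, AddCircle.coe_zsmul]
  refine mem_zmultiples_zsmul_of_isCoprime (N := p ^ k) ?_ hb.pow_left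
  have h := AddCircle.nsmul_coe_intCast_div_mul_eq_zero (T := (1 : ℚ)) 1 (pow_pos hp.out.pos k)
  rw [← natCast_zsmul] at h
  simpa using h

end Padic

theorem gamma_mod_int_iso_prufer_general (p : ℕ) [Fact p.Prime] (q : ℤ_[p])
    (hirr : ∀ (k : ℕ) (m : ℤ), (p : ℤ_[p]) ^ k * q ≠ (m : ℤ_[p]))
    (a : ℕ → ℤ)
    (happrox : ∀ n, 1 ≤ n → ‖q - (a n : ℤ_[p])‖ ≤ (p : ℝ) ^ (-(n : ℤ))) :
    Nonempty
      (((AddSubgroup.closure {x : ℚ | ∃ n, 1 ≤ n ∧ x = (a n : ℚ) / (p : ℚ) ^ n}).map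
          (QuotientAddGroup.mk' (AddSubgroup.zmultiples (1 : ℚ)))) ≃+
        AddCommGroup.primaryComponent (AddCircle (1 : ℚ)) p) := by
  have hq : q ≠ 0 := fun h => hirr 0 0 (by simp [h])
  have hp : 0 < p := (Fact.out : p.Prime).pos
  refine ⟨AddEquiv.addSubgroupCongr (le_antisymm ?_ fun x ⟨m, hm⟩ => ?_)⟩
  · rw [AddMonoidHom.map_closure, closure_le]
    rintro _ ⟨_, ⟨n, -, rfl⟩, rfl⟩
    refine ⟨n, ?_⟩
    simpa using AddCircle.nsmul_coe_intCast_div_mul_eq_zero (T := (1 : ℚ)) (a n) (pow_pos hp n)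
  · set n := m + 1 + q.valuation
    have hx : x ∈ zmultiples ((1 / p ^ (m + 1) : ℚ) : AddCircle (1 : ℚ)) := by
      have hx' : p ^ (m + 1) • x = 0 := by rw [pow_succ, mul_nsmul, hm, nsmul_zero]
      simpa using AddCircle.mem_zmultiples_coe_period_div_of_nsmul_eq_zero (T := (1 : ℚ))
        (pow_pos hp (m + 1)) hx'
    have hgen : ((1 / p ^ (m + 1) : ℚ) : AddCircle (1 : ℚ)) ∈
        zmultiples ((a n / p ^ n : ℚ) : AddCircle (1 : ℚ)) :=
      coe_one_div_pow_mem_zmultiples_of_norm_sub_le hq m.succ_pos (happrox n (by omega))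
    refine zmultiples_le_of_mem (zmultiples_le_of_mem ?_ hgen) hx
    exact mem_map_of_mem _ (subset_closure ⟨n, by omega, rfl⟩)

/-- for `q ∈ ℤ_p` with `|q|_p < 1` and infinitely many nonzero
digits (equivalently, `q` is not of the form `m / p^k` with `m ∈ ℤ`), the
quotient `Γ_q/ℤ` (realized as the image of `Γ_q` in `ℚ/ℤ`) is isomorphic to the
Prüfer p-group `ℤ(p^∞)`, the p-primary torsion subgroup of `ℚ/ℤ`. -/
theorem gamma_mod_int_iso_prufer (p : ℕ) [Fact p.Prime] (q : ℤ_[p]) (hq : ‖q‖ < 1)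
    (hirr : ∀ (k : ℕ) (m : ℤ), (p : ℤ_[p]) ^ k * q ≠ (m : ℤ_[p]))
    (a : ℕ → ℤ)
    (hbound : ∀ n, 1 ≤ n → 0 ≤ a n ∧ a n ≤ (p : ℤ) ^ n - 1)
    (happrox : ∀ n, 1 ≤ n → ‖q - (a n : ℤ_[p])‖ ≤ (p : ℝ) ^ (-(n : ℤ))) :
    Nonempty
      (((AddSubgroup.closure {x : ℚ | ∃ n, 1 ≤ n ∧ x = (a n : ℚ) / (p : ℚ) ^ n}).map
          (QuotientAddGroup.mk' (AddSubgroup.zmultiples (1 : ℚ)))) ≃+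
        AddCommGroup.primaryComponent (AddCircle (1 : ℚ)) p) :=
  gamma_mod_int_iso_prufer_general p q hirr a happrox
end
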